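/- arXiv:1604.04956 — 4 statements merged into one kernel-verified Lean document; each statement's English description precedes it below -/
import Mathlib

section
/- Let B be a matroid on a finite set X (satisfying the exchange property). Then B satisfies the symmetric exchange property: for bases B1, B2 and x ∈ B1 \ B2, there exists y ∈ B2 \ B1 such that both B1 △ {x,y} and B2 △ {x,y} are bases, where △ denotes symmetric difference. -/
open Finset

variable {α : Type*}

def ExchangeProperty [DecidableEq α] (B : Finset (Finset α)) : Prop :=
  ∀ B1 ∈ B, ∀ B2 ∈ B, ∀ x ∈ B1 \ B2, ∃ y ∈ B2 \ B1, insert y (B1.erase x) ∈ B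

def IsMatroid [DecidableEq α] (B : Finset (Finset α)) : Prop :=
  B.Nonempty ∧ ExchangeProperty B

def AlmostBasis [DecidableEq α] (B : Finset (Finset α)) (A : Finset α) : Prop :=
  ∃ B0 ∈ B, ∃ x ∈ B0, A = B0.erase x

def OverBasis [DecidableEq α] (B : Finset (Finset α)) (Q : Finset α) : Prop :=
  ∃ B0 ∈ B, ∃ y, y ∉ B0 ∧ Q = insert y B0

def Indep [DecidableEq α] (B : Finset (Finset α)) (S : Finset α) : Prop :=
  ∃ B0 ∈ B, S ⊆ B0

def IsCircuit [DecidableEq α] (B : Finset (Finset α)) (C : Finset α) : Prop :=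
  ¬ Indep B C ∧ ∀ x ∈ C, Indep B (C.erase x)

def USet [DecidableEq α] [Fintype α] (B : Finset (Finset α)) (D : Finset α) : Finset α :=
  Finset.univ.filter fun x => x ∉ D ∧ insert x D ∈ B

def CSet [DecidableEq α] (B : Finset (Finset α)) (Q : Finset α) : Finset α :=
  Q.filter fun x => Q.erase x ∈ B

def IsLinking [DecidableEq α] (B Bs : Finset (Finset α)) (L : Finset α → Finset α) : Prop :=
  Set.BijOn L ↑B ↑Bs ∧
  ∀ B0 ∈ B, ∀ a b : α, a ≠ b →
    (B0.image (Equiv.swap a b) ∈ B →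
      (L B0).image (Equiv.swap a b) ∈ Bs ∧
      (L B0).image (Equiv.swap a b) = L (B0.image (Equiv.swap a b))) ∧
    ((L B0).image (Equiv.swap a b) ∈ Bs →
      B0.image (Equiv.swap a b) ∈ B ∧
      (L B0).image (Equiv.swap a b) = L (B0.image (Equiv.swap a b)))

/-! Pass to Mathlib's `Matroid` with bases the members of `B`. Let `C` be the fundamental circuit
of `x` in `B₂` and `K` the fundamental cocircuit of `x` with respect to `B₁`. A circuit and a
cocircuit never meet in exactly one element, so some `y ≠ x` lies in `C ∩ K`. Then `y ∈ C` says
that `B₂ - y + x` is independent, and `y ∈ K`, which by the duality of fundamental circuits and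
cocircuits means `x` lies in the fundamental circuit of `y` in `B₁`, says that `B₁ - x + y` is. -/

namespace Matroid

theorem IsBase.exists_symmetric_exchange {M : Matroid α} {B₁ B₂ : Set α} {x : α}
    (hB₁ : M.IsBase B₁) (hB₂ : M.IsBase B₂) (hx : x ∈ B₁ \ B₂) :
    ∃ y ∈ B₂ \ B₁, M.IsBase (insert y B₁ \ {x}) ∧ M.IsBase (insert x B₂ \ {y}) := by
  have hC := hB₂.fundCircuit_isCircuit (hB₁.subset_ground hx.1) hx.2
  have hK := fundCocircuit_isCocircuit hx.1 hB₁
  obtain ⟨y, ⟨hyC, hyK⟩, hyx⟩ :=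
    (hC.isCocircuit_inter_nontrivial hK ⟨x, mem_fundCircuit .., mem_fundCocircuit ..⟩).exists_ne x
  have hyB₂ : y ∈ B₂ := (M.fundCircuit_subset_insert x B₂ hyC).resolve_left hyx
  have hyB₁ : y ∉ B₁ := ((M.fundCocircuit_subset_insert_compl x B₁ hyK).resolve_left hyx).2
  rw [hB₁.mem_fundCocircuit_iff_mem_fundCircuit, hB₁.indep.mem_fundCircuit_iff
    (by rw [hB₁.closure_eq]; exact hB₂.subset_ground hyB₂) hyB₁] at hyK
  rw [hB₂.indep.mem_fundCircuit_iff (by rw [hB₂.closure_eq]; exact hB₁.subset_ground hx.1) hx.2]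
    at hyC
  exact ⟨y, ⟨hyB₂, hyB₁⟩, hB₁.exchange_isBase_of_indep' hx.1 hyB₁ hyK,
    hB₂.exchange_isBase_of_indep' hyB₂ hx.2 hyC⟩

end Matroid

theorem Finset.symmDiff_pair_eq_erase_insert [DecidableEq α] {s : Finset α} {a b : α}
    (ha : a ∈ s) (hb : b ∉ s) : symmDiff s {a, b} = (insert b s).erase a := by
  ext z
  by_cases hza : z = a <;> by_cases hzb : z = b <;> simp_all [Finset.mem_symmDiff]

theorem IsMatroid.exchangeProperty_coe [DecidableEq α] {B : Finset (Finset α)} (hB : IsMatroid B) :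
    Matroid.ExchangeProperty fun S : Set α ↦ ∃ b ∈ B, ↑b = S := by
  rintro _ _ ⟨b₁, hb₁, rfl⟩ ⟨b₂, hb₂, rfl⟩ x hx
  obtain ⟨y, hy, hyB⟩ := hB.2 b₁ hb₁ b₂ hb₂ x (by simpa using hx)
  exact ⟨y, by simpa using hy, _, hyB, by simp⟩

def IsMatroid.toMatroid [DecidableEq α] {B : Finset (Finset α)} (hB : IsMatroid B) : Matroid α :=
  Matroid.ofExistsFiniteIsBase Set.univ (fun S ↦ ∃ b ∈ B, ↑b = S)
    (hB.1.elim fun b hb ↦ ⟨b, ⟨b, hb, rfl⟩, b.finite_toSet⟩) hB.exchangeProperty_coe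
    (fun _ _ ↦ Set.subset_univ _)

theorem IsMatroid.toMatroid_isBase_coe_iff [DecidableEq α] {B : Finset (Finset α)}
    (hB : IsMatroid B) {b : Finset α} : hB.toMatroid.IsBase ↑b ↔ b ∈ B := by
  simp [IsMatroid.toMatroid]

theorem symmetric_exchange [DecidableEq α] (B : Finset (Finset α))
    (hB : IsMatroid B) (B1 B2 : Finset α) (h1 : B1 ∈ B) (h2 : B2 ∈ B)
    (x : α) (hx : x ∈ B1 \ B2) :
    ∃ y ∈ B2 \ B1, symmDiff B1 {x, y} ∈ B ∧ symmDiff B2 {x, y} ∈ B := by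
  rw [Finset.mem_sdiff] at hx
  obtain ⟨y, ⟨hyB₂, hyB₁⟩, hbase₁, hbase₂⟩ :=
    (hB.toMatroid_isBase_coe_iff.2 h1).exists_symmetric_exchange
      (hB.toMatroid_isBase_coe_iff.2 h2) (by simpa using hx)
  rw [Finset.mem_coe] at hyB₂ hyB₁
  refine ⟨y, Finset.mem_sdiff.2 ⟨hyB₂, hyB₁⟩, ?_, ?_⟩
  · rw [Finset.symmDiff_pair_eq_erase_insert hx.1 hyB₁, ← hB.toMatroid_isBase_coe_iff]
    simpa using hbase₁
  · rw [Finset.pair_comm, Finset.symmDiff_pair_eq_erase_insert hyB₂ hx.2,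
      ← hB.toMatroid_isBase_coe_iff]
    simpa using hbase₂
end

section
/- Let B be a matroid on a finite set X. Suppose a, z ∈ X are distinct, C ⊆ X with a, z ∉ C, and both C ∪ {a} and C ∪ {z} are almost-bases of B. Then either C ∪ {a, z} is a basis, or U(C ∪ {a}) = U(C ∪ {z}), where U(D) = {x ∉ D : D ∪ {x} is a basis}. -/
/-!
Suppose `C ∪ {a, z}` is not a basis and `C ∪ {a, x}` is. Complete `C ∪ {z}` to a basis
`C ∪ {z, t}` and exchange `t` into `C ∪ {a, x}`: the element that comes back lies in `{a, x}`,
and it cannot be `a`, so `C ∪ {z, x}` is a basis. Hence `U(C ∪ {a}) ⊆ U(C ∪ {z})`, and the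
reverse inclusion is symmetric.
-/

open Finset

variable {α : Type*}

section

variable [DecidableEq α]

theorem mem_USet [Fintype α] {B : Finset (Finset α)} {D : Finset α} {x : α} :
    x ∈ USet B D ↔ x ∉ D ∧ insert x D ∈ B := by
  simp [USet]

theorem AlmostBasis.insert_mem_of_insert_insert_mem {B : Finset (Finset α)}
    (hB : ExchangeProperty B) {C D : Finset α} {a x : α} (hD : AlmostBasis B D)
    (hCD : C ⊆ D) (ha : insert a D ∉ B) (hx : insert x (insert a C) ∈ B) :
    insert x D ∈ B := by
  obtain ⟨B0, hB0, t, htB0, rfl⟩ := hD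
  have hB0_eq : insert t (B0.erase t) = B0 := insert_erase htB0
  by_cases htx : t = x
  · rwa [← htx, hB0_eq]
  have hta : t ≠ a := by rintro rfl; rw [hB0_eq] at ha; exact ha hB0
  have htC : t ∉ C := fun ht => notMem_erase t B0 (hCD ht)
  have ht : t ∈ B0 \ insert x (insert a C) := by simp [htB0, htx, hta, htC]
  obtain ⟨w, hw, hwB⟩ := hB B0 hB0 _ hx t ht
  have hwC : w ∉ C := fun h => (mem_sdiff.1 hw).2 (mem_of_mem_erase (hCD h))
  rcases mem_insert.1 (mem_sdiff.1 hw).1 with rfl | hw'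
  · exact hwB
  · rcases mem_insert.1 hw' with rfl | hwC'
    · exact absurd hwB ha
    · exact absurd hwC' hwC

theorem USet_subset_of_insert_insert_notMem [Fintype α] {B : Finset (Finset α)}
    (hB : ExchangeProperty B) {C : Finset α} {a z : α} (hz : AlmostBasis B (insert z C))
    (h : insert a (insert z C) ∉ B) : USet B (insert a C) ⊆ USet B (insert z C) := by
  intro x hx
  obtain ⟨hxaC, hxB⟩ := mem_USet.1 hx
  have hxz : x ≠ z := by
    rintro rfl
    exact h (insert_comm a x C ▸ hxB)
  have hxzC : x ∉ insert z C := by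
    simp only [mem_insert, not_or] at hxaC ⊢
    exact ⟨hxz, hxaC.2⟩
  exact mem_USet.2 ⟨hxzC, hz.insert_mem_of_insert_insert_mem hB (subset_insert z C) h hxB⟩

end

theorem non_triangle_general [DecidableEq α] [Fintype α] (B : Finset (Finset α))
    (hB : IsMatroid B) (C : Finset α) (a z : α)
    (ha : AlmostBasis B (insert a C)) (hz : AlmostBasis B (insert z C)) :
    insert a (insert z C) ∈ B ∨ USet B (insert a C) = USet B (insert z C) := by
  by_cases h : insert a (insert z C) ∈ B
  · exact Or.inl h
  · refine Or.inr (Subset.antisymm (USet_subset_of_insert_insert_notMem hB.2 hz h)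
      (USet_subset_of_insert_insert_notMem hB.2 ha ?_))
    rwa [insert_comm]

theorem non_triangle [DecidableEq α] [Fintype α] (B : Finset (Finset α))
    (hB : IsMatroid B) (C : Finset α) (a z : α)
    (haz : a ≠ z) (haC : a ∉ C) (hzC : z ∉ C)
    (ha : AlmostBasis B (insert a C)) (hz : AlmostBasis B (insert z C)) :
    insert a (insert z C) ∈ B ∨ USet B (insert a C) = USet B (insert z C) :=
  non_triangle_general B hB C a z ha hz
end

section
/- Let B and B* be nonempty families of subsets of a finite set X, and let L : B → B* be a linking, i.e., a bijection B ↦ B* such that for every B ∈ B and every transposition τ of X: (L1) if τ(B) ∈ B then τ(B*) ∈ B* and τ(B*) = (τ(B))*; (L2) if τ(B*) ∈ B* then τ(B) ∈ B and τ(B*) = (τ(B))*. Then for every B ∈ B, either B* = B or B* = X \ B. -/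
open Finset

variable {α : Type*}

/-!
A transposition `(a b)` fixes a set `S` exactly when `a` and `b` are both in `S` or both outside it.
By (L1), (L2) and the injectivity of `L`, `(a b)` fixes `B` if and only if it fixes `B*`; hence the
truth value of `x ∈ B ↔ x ∈ B*` does not depend on `x`, which means `B* = B` or `B* = X \ B`.
-/

open Equiv

theorem Finset.image_swap_eq_self_iff [DecidableEq α] {s : Finset α} {a b : α} :
    s.image (swap a b) = s ↔ (a ∈ s ↔ b ∈ s) := by
  refine ⟨fun h => ?_, fun h => ?_⟩
  · constructor <;> intro hx <;> simpa [h] using mem_image_of_mem (swap a b) hx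
  · ext x
    rw [← coe_toEmbedding, ← map_eq_image, mem_map_equiv, symm_swap]
    rcases eq_or_ne x a with rfl | hxa
    · simpa using h.symm
    rcases eq_or_ne x b with rfl | hxb
    · simpa using h
    · rw [swap_apply_of_ne_of_ne hxa hxb]

theorem Finset.eq_or_eq_compl_of_forall_iff_iff [DecidableEq α] [Fintype α] {s t : Finset α}
    (h : ∀ a b, (a ∈ t ↔ b ∈ t) ↔ (a ∈ s ↔ b ∈ s)) : t = s ∨ t = sᶜ := by
  by_cases hst : ∀ x, x ∈ t ↔ x ∈ s
  · exact Or.inl (ext hst)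
  · push Not at hst
    obtain ⟨a, ha⟩ := hst
    refine Or.inr (ext fun x => ?_)
    have := h a x
    rw [mem_compl]
    tauto

namespace IsLinking

variable [DecidableEq α] {B Bs : Finset (Finset α)} {L : Finset α → Finset α}

theorem image_swap_eq_self_iff (hL : IsLinking B Bs L) {B0 : Finset α} (hB0 : B0 ∈ B)
    {a b : α} (hab : a ≠ b) :
    (L B0).image (swap a b) = L B0 ↔ B0.image (swap a b) = B0 := by
  obtain ⟨hbij, hswap⟩ := hL
  constructor
  · intro h
    obtain ⟨hmem, himage⟩ := (hswap B0 hB0 a b hab).2 (by rw [h]; exact hbij.mapsTo hB0)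
    exact (hbij.injOn hB0 hmem (h.symm.trans himage)).symm
  · intro h
    rw [((hswap B0 hB0 a b hab).1 (by rw [h]; exact hB0)).2, h]

theorem mem_iff_mem_iff (hL : IsLinking B Bs L) {B0 : Finset α} (hB0 : B0 ∈ B) (a b : α) :
    (a ∈ L B0 ↔ b ∈ L B0) ↔ (a ∈ B0 ↔ b ∈ B0) := by
  rcases eq_or_ne a b with rfl | hab
  · simp only [iff_self]
  · simpa only [Finset.image_swap_eq_self_iff] using hL.image_swap_eq_self_iff hB0 hab

end IsLinking

theorem linking_id_or_comp_basis_general [DecidableEq α] [Fintype α]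
    (B Bs : Finset (Finset α))
    (L : Finset α → Finset α) (hL : IsLinking B Bs L) :
    ∀ B0 ∈ B, L B0 = B0 ∨ L B0 = Finset.univ \ B0 := by
  intro B0 hB0
  rw [← compl_eq_univ_sdiff]
  exact eq_or_eq_compl_of_forall_iff_iff (hL.mem_iff_mem_iff hB0)

theorem linking_id_or_comp_basis [DecidableEq α] [Fintype α]
    (B Bs : Finset (Finset α)) (hB : B.Nonempty) (hBs : Bs.Nonempty)
    (L : Finset α → Finset α) (hL : IsLinking B Bs L) :
    ∀ B0 ∈ B, L B0 = B0 ∨ L B0 = Finset.univ \ B0 :=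
  linking_id_or_comp_basis_general B Bs L hL
end

section
/- Let B be a matroid on a finite set X, let A be an almost-basis, and let Y ⊆ X be disjoint from A with A ∪ {y} not a basis for every y ∈ Y. Suppose C is a circuit and c ∈ C satisfies C \ {c} ⊆ A ∪ Y and c ∉ A ∪ Y. Then A ∪ Y ∪ {c} contains no basis. -/
/-!
Given a basis `B₀ ⊆ A ∪ Y + c`, extend the independent set `C - c` to a basis `B₂ ⊆ (C - c) ∪ B₀`.
Since `C` is dependent, `c ∉ B₂`, so `B₂ ⊆ A ∪ Y`. Exchanging the basis `A + x` against `B₂` then gives a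
basis `A + y` with `y ∈ Y` (or `x ∈ B₂ ⊆ A ∪ Y`, so `x ∈ Y`), contradicting the hypothesis on `Y`.
-/

open Finset

variable {α : Type*}

namespace ExchangeProperty

variable [DecidableEq α] {B : Finset (Finset α)}

/-- A basis containing `I` with the fewest elements outside `B1` works: an element outside `I ∪ B1`
could be exchanged towards `B1`. -/
theorem exists_basis_subset_union (hex : ExchangeProperty B) {I B1 : Finset α}
    (hI : Indep B I) (hB1 : B1 ∈ B) : ∃ B2 ∈ B, I ⊆ B2 ∧ B2 ⊆ I ∪ B1 := by
  obtain ⟨B2, hB2I, hmin⟩ := exists_min_image (B.filter (I ⊆ ·)) (fun b => #(b \ B1))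
    (by simpa [Indep, Finset.Nonempty] using hI)
  rw [mem_filter] at hB2I
  obtain ⟨hB2, hIB2⟩ := hB2I
  refine ⟨B2, hB2, hIB2, fun z hz => ?_⟩
  by_contra hzIB1
  rw [mem_union, not_or] at hzIB1
  obtain ⟨w, hw, hB3⟩ := hex B2 hB2 B1 hB1 z (mem_sdiff.2 ⟨hz, hzIB1.2⟩)
  have hIB3 : I ⊆ insert w (B2.erase z) := fun e he =>
    mem_insert_of_mem (mem_erase.2 ⟨fun h => hzIB1.1 (h ▸ he), hIB2 he⟩)
  have hcloser : insert w (B2.erase z) \ B1 ⊆ (B2 \ B1).erase z := by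
    intro e
    simp only [mem_sdiff, mem_insert, mem_erase]
    rintro ⟨rfl | ⟨hez, heB2⟩, heB1⟩
    · exact absurd (mem_sdiff.1 hw).1 heB1
    · exact ⟨hez, heB2, heB1⟩
  have hnotCloser := hmin _ (mem_filter.2 ⟨hB3, hIB3⟩)
  have hstrictlyCloser := (card_le_card hcloser).trans_lt (card_erase_lt_of_mem (mem_sdiff.2 ⟨hz, hzIB1.2⟩))
  omega

theorem not_basis_subset_almostBasis_union (hex : ExchangeProperty B) {A Y : Finset α}
    (hA : AlmostBasis B A) (hY : ∀ y ∈ Y, insert y A ∉ B) : ∀ b ∈ B, ¬ b ⊆ A ∪ Y := by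
  obtain ⟨B0, hB0, x, hx, rfl⟩ := hA
  intro b hb hbAY
  by_cases hxb : x ∈ b
  · have hxY : x ∈ Y := (mem_union.1 (hbAY hxb)).resolve_left (notMem_erase x B0)
    exact hY x hxY (by rwa [insert_erase hx])
  · obtain ⟨y, hy, hyB⟩ := hex B0 hB0 b hb x (mem_sdiff.2 ⟨hx, hxb⟩)
    rw [mem_sdiff] at hy
    have hyY : y ∈ Y := (mem_union.1 (hbAY hy.1)).resolve_left fun h => hy.2 (mem_of_mem_erase h)
    exact hY y hyY hyB

end ExchangeProperty

theorem IsCircuit.notMem_of_erase_subset [DecidableEq α] {B : Finset (Finset α)} {C B2 : Finset α}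
    {c : α} (hC : IsCircuit B C) (hB2 : B2 ∈ B) (hCB2 : C.erase c ⊆ B2) : c ∉ B2 := fun hc =>
  hC.1 ⟨B2, hB2, fun e he => (eq_or_ne e c).elim (· ▸ hc) fun hec => hCB2 (mem_erase.2 ⟨hec, he⟩)⟩

theorem circuit_no_basis_general [DecidableEq α] (B : Finset (Finset α))
    (hB : IsMatroid B) (A Y : Finset α)
    (hA : AlmostBasis B A)
    (hY : ∀ y ∈ Y, insert y A ∉ B)
    (C : Finset α) (hC : IsCircuit B C) (c : α) (hc : c ∈ C)
    (hCs : C.erase c ⊆ A ∪ Y) :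
    ∀ B0 ∈ B, ¬ B0 ⊆ insert c (A ∪ Y) := by
  intro B1 hB1 hB1sub
  obtain ⟨B2, hB2, hCB2, hB2sub⟩ := hB.2.exists_basis_subset_union (hC.2 c hc) hB1
  have hcB2 : c ∉ B2 := hC.notMem_of_erase_subset hB2 hCB2
  refine hB.2.not_basis_subset_almostBasis_union hA hY B2 hB2 fun e he => ?_
  rcases mem_union.1 (hB2sub he) with heC | heB1
  · exact hCs heC
  · exact (mem_insert.1 (hB1sub heB1)).resolve_left (by rintro rfl; exact hcB2 he)

theorem circuit_no_basis [DecidableEq α] (B : Finset (Finset α))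
    (hB : IsMatroid B) (A Y : Finset α)
    (hA : AlmostBasis B A) (hdisj : Disjoint A Y)
    (hY : ∀ y ∈ Y, insert y A ∉ B)
    (C : Finset α) (hC : IsCircuit B C) (c : α) (hc : c ∈ C)
    (hCs : C.erase c ⊆ A ∪ Y) (hcAY : c ∉ A ∪ Y) :
    ∀ B0 ∈ B, ¬ B0 ⊆ insert c (A ∪ Y) :=
  circuit_no_basis_general B hB A Y hA hY C hC c hc hCs
end
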